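/- arXiv:2412.03731 — 4 statements merged into one kernel-verified Lean document; each statement's English description precedes it below -/
import Mathlib

section
/- If P1 and P2 are independent random variables each stochastically larger than a Uniform(0,1) random variable (i.e., Pr(Pi ≤ t) ≤ t for all t in [0,1]), then Pr(P1·P2 ≤ κ_α) ≤ α, where κ_α = exp(-χ²_{4,1-α}/2) and χ²_{4,1-α} is the (1-α)-quantile of the chi-squared distribution with 4 degrees of freedom. -/
open MeasureTheory ProbabilityTheory Real Set
open scoped ENNReal

/-!
Conditionally on `P2 = y`, super-uniformity of `P1` bounds `Pr(P1 * y ≤ κ)` by `κ / max κ y`.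
Integrating this decreasing function of `P2` with the layer-cake formula, super-uniformity of `P2`
bounds the mean by its value for a uniform variable, `∫₀¹ κ / max κ t dt = κ (1 - log κ)`.
For `κ = exp (-χ / 2)` this is `exp (-χ / 2) (1 + χ / 2)`, the upper tail of `χ²₄` at `χ`,
which equals `α` when `χ` is the `(1 - α)`-quantile.
-/

lemma gammaMeasure_Iic_of_neg {a r x : ℝ} (hx : x < 0) : gammaMeasure a r (Iic x) = 0 :=
  measure_mono_null (Iic_subset_Iio.mpr hx) <| by
    rw [gammaMeasure, withDensity_apply _ measurableSet_Iio]
    exact lintegral_gammaPDF_of_nonpos le_rfl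

lemma hasDerivAt_one_sub_exp_neg_half_mul_one_add_half (y : ℝ) :
    HasDerivAt (fun y => 1 - exp (-y / 2) * (1 + y / 2)) (1 / 4 * y * exp (-y / 2)) y := by
  have hexp : HasDerivAt (fun y : ℝ => exp (-y / 2)) (exp (-y / 2) * (-1 / 2)) y :=
    ((hasDerivAt_id' y).fun_neg.div_const 2).exp
  have hlin : HasDerivAt (fun y : ℝ => 1 + y / 2) (1 / 2) y :=
    ((hasDerivAt_id' y).div_const 2).const_add 1
  exact ((hexp.fun_mul hlin).const_sub 1).congr_deriv (by ring)

lemma gammaMeasure_two_half_Iic {x : ℝ} (hx : 0 ≤ x) :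
    gammaMeasure 2 (1 / 2) (Iic x) = ENNReal.ofReal (1 - exp (-x / 2) * (1 + x / 2)) := by
  have hpdf : ∀ y ∈ Icc 0 x, gammaPDF 2 (1 / 2) y = ENNReal.ofReal (1 / 4 * y * exp (-y / 2)) := by
    intro y hy
    rw [gammaPDF_of_nonneg hy.1, Gamma_two]
    norm_num
    ring_nf
  have hcont : Continuous fun y : ℝ => 1 / 4 * y * exp (-y / 2) := by fun_prop
  rw [gammaMeasure, withDensity_apply _ measurableSet_Iic,
    lintegral_Iic_eq_lintegral_Iio_add_Icc _ hx, lintegral_gammaPDF_of_nonpos le_rfl, zero_add,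
    setLIntegral_congr_fun measurableSet_Icc hpdf,
    ← ofReal_integral_eq_lintegral_ofReal hcont.integrableOn_Icc]
  · rw [integral_Icc_eq_integral_Ioc, ← intervalIntegral.integral_of_le hx,
      intervalIntegral.integral_eq_sub_of_hasDerivAt
        (fun y _ => hasDerivAt_one_sub_exp_neg_half_mul_one_add_half y)
        (hcont.intervalIntegrable 0 x)]
    norm_num
  · exact (ae_restrict_iff' measurableSet_Icc).mpr (ae_of_all _ fun y hy => by
      have := hy.1; positivity)

lemma exp_neg_div_two_mul_one_add_le_one (x : ℝ) : exp (-x / 2) * (1 + x / 2) ≤ 1 := by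
  calc exp (-x / 2) * (1 + x / 2) ≤ exp (-x / 2) * exp (x / 2) := by
        gcongr; linarith [add_one_le_exp (x / 2)]
    _ = 1 := by rw [← exp_add, neg_div, neg_add_cancel, exp_zero]

def IsSuperUniform (μ : Measure ℝ) : Prop :=
  ∀ t ∈ Icc (0 : ℝ) 1, μ (Iic t) ≤ ENNReal.ofReal t

lemma isSuperUniform_map {Ω : Type*} [MeasurableSpace Ω] {P : Measure Ω} {X : Ω → ℝ}
    (hX : Measurable X) (h : ∀ t ∈ Icc (0 : ℝ) 1, P {ω | X ω ≤ t} ≤ ENNReal.ofReal t) :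
    IsSuperUniform (P.map X) := fun t ht => by
  rw [Measure.map_apply hX measurableSet_Iic]
  exact h t ht

section SuperUniform

variable {μ ν : Measure ℝ} [IsProbabilityMeasure μ] [IsProbabilityMeasure ν] {κ : ℝ}

lemma div_max_mem_Icc (hκ : 0 < κ) (y : ℝ) : κ / max κ y ∈ Icc 0 1 :=
  ⟨by positivity, div_le_one_of_le₀ (le_max_left κ y) (by positivity)⟩

lemma continuous_div_max (hκ : 0 < κ) : Continuous fun t => κ / max κ t :=
  continuous_const.div (continuous_const.max continuous_id) fun t =>
    (hκ.trans_le (le_max_left κ t)).ne'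

lemma IsSuperUniform.measure_mul_le_le (hμ : IsSuperUniform μ) (hκ : 0 < κ) (y : ℝ) :
    μ {x | x * y ≤ κ} ≤ ENNReal.ofReal (κ / max κ y) := by
  rcases le_or_gt y κ with hy | hy
  · rw [max_eq_left hy, div_self hκ.ne', ENNReal.ofReal_one]
    exact prob_le_one
  · have hy0 : 0 < y := hκ.trans hy
    have hset : {x | x * y ≤ κ} = Iic (κ / y) := by
      ext x
      simp [le_div_iff₀ hy0]
    rw [hset, max_eq_right hy.le]
    exact hμ _ (max_eq_right hy.le ▸ div_max_mem_Icc hκ y)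

lemma IsSuperUniform.measure_lt_div_max_le (hν : IsSuperUniform ν) (hκ : 0 < κ) {t : ℝ}
    (ht : 0 < t) : ν {y | t < κ / max κ y} ≤ ENNReal.ofReal (κ / max κ t) := by
  rcases le_or_gt t κ with htκ | htκ
  · rw [max_eq_left htκ, div_self hκ.ne', ENNReal.ofReal_one]
    exact prob_le_one
  · have hsub : {y | t < κ / max κ y} ⊆ Iic (κ / t) := fun y hy => by
      have hmax : 0 < max κ y := hκ.trans_le (le_max_left κ y)
      replace hy : t * max κ y < κ := (lt_div_iff₀ hmax).mp hy
      rw [mem_Iic, le_div_iff₀ ht]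
      nlinarith [le_max_right κ y]
    rw [max_eq_right htκ.le]
    exact (measure_mono hsub).trans (hν _ (max_eq_right htκ.le ▸ div_max_mem_Icc hκ t))

lemma integral_div_max (hκ : 0 < κ) (hκ1 : κ ≤ 1) :
    ∫ t in (0 : ℝ)..1, κ / max κ t = κ * (1 - log κ) := by
  have hint : ∀ a b : ℝ, IntervalIntegrable (fun t => κ / max κ t) volume a b :=
    (continuous_div_max hκ).intervalIntegrable
  have hlow : ∫ t in (0 : ℝ)..κ, κ / max κ t = κ := by
    rw [intervalIntegral.integral_congr (g := fun _ => 1) fun t ht => by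
      rw [uIcc_of_le hκ.le] at ht
      simp [max_eq_left ht.2, hκ.ne']]
    simp
  have hhigh : ∫ t in κ..1, κ / max κ t = -(κ * log κ) := by
    rw [intervalIntegral.integral_congr (g := fun t => κ * t⁻¹) fun t ht => by
      rw [uIcc_of_le hκ1] at ht
      simp [max_eq_right ht.1, div_eq_mul_inv]]
    have h0 : (0 : ℝ) ∉ uIcc κ 1 := by
      rw [uIcc_of_le hκ1]
      exact fun h => hκ.not_ge h.1
    rw [intervalIntegral.integral_const_mul, integral_inv h0, div_eq_inv_mul, mul_one, log_inv,
      mul_neg]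
  rw [← intervalIntegral.integral_add_adjacent_intervals (hint 0 κ) (hint κ 1), hlow, hhigh]
  ring

lemma IsSuperUniform.lintegral_div_max_le (hν : IsSuperUniform ν) (hκ : 0 < κ) (hκ1 : κ ≤ 1) :
    ∫⁻ y, ENNReal.ofReal (κ / max κ y) ∂ν ≤ ENNReal.ofReal (κ * (1 - log κ)) := by
  have hmeas : Measurable fun y => κ / max κ y := (continuous_div_max hκ).measurable
  have htail : ∀ t ∈ Ioi (0 : ℝ),
      ν {y | t < κ / max κ y} ≤ (Iio 1).indicator (fun t => ENNReal.ofReal (κ / max κ t)) t := by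
    intro t ht
    rcases lt_or_ge t 1 with ht1 | ht1
    · rw [indicator_of_mem (show t ∈ Iio 1 from ht1)]
      exact hν.measure_lt_div_max_le hκ ht
    · have : {y | t < κ / max κ y} = ∅ :=
        eq_empty_of_forall_notMem fun y hy => (hy.trans_le ((div_max_mem_Icc hκ y).2)).not_ge ht1
      simp [this]
  calc ∫⁻ y, ENNReal.ofReal (κ / max κ y) ∂ν
      = ∫⁻ t in Ioi 0, ν {y | t < κ / max κ y} :=
        lintegral_eq_lintegral_meas_lt ν (ae_of_all _ fun y => (div_max_mem_Icc hκ y).1)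
          hmeas.aemeasurable
    _ ≤ ∫⁻ t in Ioi 0, (Iio 1).indicator (fun t => ENNReal.ofReal (κ / max κ t)) t :=
        setLIntegral_mono' measurableSet_Ioi htail
    _ = ∫⁻ t in Ioc 0 1, ENNReal.ofReal (κ / max κ t) := by
        rw [lintegral_indicator measurableSet_Iio, Measure.restrict_restrict measurableSet_Iio,
          Iio_inter_Ioi]
        exact setLIntegral_congr Ioo_ae_eq_Ioc
    _ = ENNReal.ofReal (κ * (1 - log κ)) := by
        rw [← ofReal_integral_eq_lintegral_ofReal, ← intervalIntegral.integral_of_le zero_le_one,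
          integral_div_max hκ hκ1]
        · exact (continuous_div_max hκ).integrableOn_Icc.mono_set Ioc_subset_Icc_self
        · exact ae_of_all _ fun y => (div_max_mem_Icc hκ y).1

lemma IsSuperUniform.prod_measure_mul_le_le (hμ : IsSuperUniform μ) (hν : IsSuperUniform ν)
    (hκ : 0 < κ) (hκ1 : κ ≤ 1) :
    μ.prod ν {p | p.1 * p.2 ≤ κ} ≤ ENNReal.ofReal (κ * (1 - log κ)) := by
  rw [Measure.prod_apply_symm (measurableSet_le (by fun_prop) measurable_const)]
  exact (lintegral_mono fun y => hμ.measure_mul_le_le hκ y).trans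
    (hν.lintegral_div_max_le hκ hκ1)

end SuperUniform

lemma gammaMeasure_two_half_quantile {α χ : ℝ} (hα : α < 1)
    (hχ : gammaMeasure 2 (1 / 2) (Iic χ) = ENNReal.ofReal (1 - α)) :
    0 ≤ χ ∧ α = exp (-χ / 2) * (1 + χ / 2) := by
  have hχ0 : 0 ≤ χ := by
    by_contra! hneg
    rw [gammaMeasure_Iic_of_neg hneg, eq_comm, ENNReal.ofReal_eq_zero] at hχ
    linarith
  rw [gammaMeasure_two_half_Iic hχ0, ENNReal.ofReal_eq_ofReal_iff
    (by linarith [exp_neg_div_two_mul_one_add_le_one χ]) (by linarith)] at hχ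
  exact ⟨hχ0, by linarith⟩

theorem prod_pvalues_combined_valid_general
    {Ω : Type*} [MeasurableSpace Ω] (P : Measure Ω) [IsProbabilityMeasure P]
    (P1 P2 : Ω → ℝ) (hP1 : Measurable P1) (hP2 : Measurable P2)
    (hP1unif : ∀ t ∈ Set.Icc (0 : ℝ) 1, P {ω | P1 ω ≤ t} ≤ ENNReal.ofReal t)
    (hP2unif : ∀ t ∈ Set.Icc (0 : ℝ) 1, P {ω | P2 ω ≤ t} ≤ ENNReal.ofReal t)
    (hindep : IndepFun P1 P2 P)
    (α : ℝ) (hα : α ∈ Set.Ioo (0 : ℝ) 1)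
    (χα : ℝ)
    (hχα : gammaMeasure 2 (1 / 2) (Set.Iic χα) = ENNReal.ofReal (1 - α)) :
    P {ω | P1 ω * P2 ω ≤ Real.exp (-χα / 2)} ≤ ENNReal.ofReal α := by
  obtain ⟨hχ0, hα_eq⟩ := gammaMeasure_two_half_quantile hα.2 hχα
  have hlog : log (exp (-χα / 2)) = -χα / 2 := log_exp _
  set κ := exp (-χα / 2)
  have hκ0 : 0 < κ := exp_pos _
  have hκ1 : κ ≤ 1 := exp_le_one_iff.mpr (by linarith)
  have : IsProbabilityMeasure (P.map P1) := Measure.isProbabilityMeasure_map hP1.aemeasurable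
  have : IsProbabilityMeasure (P.map P2) := Measure.isProbabilityMeasure_map hP2.aemeasurable
  have hjoint : P.map (fun ω => (P1 ω, P2 ω)) = (P.map P1).prod (P.map P2) :=
    (indepFun_iff_map_prod_eq_prod_map_map hP1.aemeasurable hP2.aemeasurable).mp hindep
  calc P {ω | P1 ω * P2 ω ≤ κ}
      = (P.map P1).prod (P.map P2) {p | p.1 * p.2 ≤ κ} := by
        rw [← hjoint, Measure.map_apply (hP1.prodMk hP2)
          (measurableSet_le (by fun_prop) measurable_const)]
        rfl
    _ ≤ ENNReal.ofReal (κ * (1 - log κ)) :=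
        (isSuperUniform_map hP1 hP1unif).prod_measure_mul_le_le
          (isSuperUniform_map hP2 hP2unif) hκ0 hκ1
    _ = ENNReal.ofReal α := by
        rw [hlog, hα_eq]
        ring_nf

/-- If `P1` and `P2` are independent `[0,1]`-valued random variables, each stochastically
larger than a `Uniform(0,1)` variable (`Pr(Pi ≤ t) ≤ t` for `t ∈ [0,1]`), then
`Pr(P1 * P2 ≤ κ_α) ≤ α`, where `κ_α = exp (-χ²₄(1-α)/2)` and `χ²₄(1-α)` is the
`(1-α)`-quantile of the chi-squared distribution with 4 degrees of freedom
(the Gamma distribution with shape 2 and rate 1/2). -/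
theorem prod_pvalues_combined_valid
    {Ω : Type*} [MeasurableSpace Ω] (P : Measure Ω) [IsProbabilityMeasure P]
    (P1 P2 : Ω → ℝ) (hP1 : Measurable P1) (hP2 : Measurable P2)
    (hP1range : ∀ ω, P1 ω ∈ Set.Icc (0 : ℝ) 1)
    (hP2range : ∀ ω, P2 ω ∈ Set.Icc (0 : ℝ) 1)
    (hP1unif : ∀ t ∈ Set.Icc (0 : ℝ) 1, P {ω | P1 ω ≤ t} ≤ ENNReal.ofReal t)
    (hP2unif : ∀ t ∈ Set.Icc (0 : ℝ) 1, P {ω | P2 ω ≤ t} ≤ ENNReal.ofReal t)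
    (hindep : IndepFun P1 P2 P)
    (α : ℝ) (hα : α ∈ Set.Ioo (0 : ℝ) 1)
    (χα : ℝ)
    (hχα : gammaMeasure 2 (1 / 2) (Set.Iic χα) = ENNReal.ofReal (1 - α)) :
    P {ω | P1 ω * P2 ω ≤ Real.exp (-χα / 2)} ≤ ENNReal.ofReal α :=
  prod_pvalues_combined_valid_general P P1 P2 hP1 hP2 hP1unif hP2unif hindep α hα χα hχα
end

section
/- Under Rosenbaum's sensitivity model, a probability vector (η_1,…,η_J) with Σ η_j = 1 satisfies 1/Γ ≤ η_j/η_{j'} ≤ Γ for all j, j' if and only if there exist u_1,…,u_J ∈ [0,1] and κ ∈ ℝ such that η_j = exp(κ + log(Γ)·u_j)/Σ_{j'} exp(κ + log(Γ)·u_{j'}) for all j. -/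
/-- Equivalent semiparametric form of Rosenbaum's sensitivity model: a positive probability
vector `η` satisfies `1/Γ ≤ η_j/η_{j'} ≤ Γ` for all `j, j'` iff there are `u_j ∈ [0,1]` and
`κ ∈ ℝ` with `η_j = exp(κ + log Γ · u_j) / Σ_{j'} exp(κ + log Γ · u_{j'})`. -/
theorem rosenbaum_sensitivity_equiv
    (J : ℕ) (hJ : 1 ≤ J) (Γ : ℝ) (hΓ : 1 ≤ Γ)
    (η : Fin J → ℝ) (hηpos : ∀ j, 0 < η j) (hηsum : ∑ j, η j = 1) :
    (∀ j j' : Fin J, 1 / Γ ≤ η j / η j' ∧ η j / η j' ≤ Γ) ↔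
      ∃ (u : Fin J → ℝ) (κ : ℝ), (∀ j, u j ∈ Set.Icc (0 : ℝ) 1) ∧
        ∀ j, η j = Real.exp (κ + Real.log Γ * u j) /
          ∑ j', Real.exp (κ + Real.log Γ * u j') := by
  have hΓpos : (0:ℝ) < Γ := lt_of_lt_of_le one_pos hΓ
  constructor
  · intro h
    rcases eq_or_lt_of_le hΓ with hΓ1 | hΓ1
    · -- Γ = 1 : all η equal, so η j = 1 / J
      have hconst : ∀ j j' : Fin J, η j = η j' := by
        intro j j'
        have h1 := (h j j').1
        have h2 := (h j j').2
        rw [← hΓ1] at h1 h2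
        simp at h1
        have : η j / η j' = 1 := le_antisymm h2 h1
        rw [div_eq_one_iff_eq (hηpos j').ne'] at this
        exact this
      refine ⟨fun _ => 0, 0, fun j => ⟨le_refl _, zero_le_one⟩, fun j => ?_⟩
      have hJ0 : (0:ℝ) < (J:ℝ) := by exact_mod_cast hJ
      have hsum : ∑ j' : Fin J, η ⟨0, hJ⟩ = 1 := by
        rw [← hηsum]; exact Finset.sum_congr rfl fun x _ => (hconst _ _)
      rw [Finset.sum_const, Finset.card_univ, Fintype.card_fin, nsmul_eq_mul] at hsum
      have hηj : η j = 1 / (J:ℝ) := by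
        have := hconst j ⟨0, hJ⟩
        rw [this]
        field_simp
        linarith [hsum]
      rw [hηj, ← hΓ1]
      simp [Real.log_one, Finset.sum_const, Finset.card_univ]
    · -- Γ > 1
      have hL : 0 < Real.log Γ := Real.log_pos hΓ1
      obtain ⟨j0, -, hj0⟩ := Finset.exists_min_image Finset.univ η
        ⟨⟨0, hJ⟩, Finset.mem_univ _⟩
      have hj0min : ∀ j, η j0 ≤ η j := fun j => hj0 j (Finset.mem_univ j)
      set L := Real.log Γ
      refine ⟨fun j => Real.log (η j / η j0) / L, Real.log (η j0), ?_, ?_⟩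
      · intro j
        have hratio1 : 1 ≤ η j / η j0 :=
          (one_le_div (hηpos j0)).2 (hj0min j)
        constructor
        · exact div_nonneg (Real.log_nonneg hratio1) hL.le
        · rw [div_le_one hL]
          exact Real.log_le_log (lt_of_lt_of_le one_pos hratio1) (h j j0).2
      · have key : ∀ j, Real.exp (Real.log (η j0) + L * (Real.log (η j / η j0) / L)) = η j := by
          intro j
          rw [mul_div_cancel₀ _ hL.ne', Real.exp_add, Real.exp_log (hηpos j0),
            Real.exp_log (div_pos (hηpos j) (hηpos j0))]
          rw [mul_comm, div_mul_cancel₀ _ (hηpos j0).ne']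
        intro j
        rw [key j]
        have : ∑ j', Real.exp (Real.log (η j0) + L * (Real.log (η j' / η j0) / L)) = 1 := by
          rw [← hηsum]; exact Finset.sum_congr rfl fun x _ => key x
        rw [this, div_one]
  · rintro ⟨u, κ, hu, hrep⟩
    intro j j'
    haveI : Nonempty (Fin J) := ⟨⟨0, hJ⟩⟩
    have hS : 0 < ∑ j'', Real.exp (κ + Real.log Γ * u j'') :=
      Finset.sum_pos (fun i _ => Real.exp_pos _) Finset.univ_nonempty
    have hratio : η j / η j' = Real.exp (Real.log Γ * (u j - u j')) := by
      rw [hrep j, hrep j', div_div_div_comm, div_self hS.ne', div_one, ← Real.exp_sub]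
      congr 1
      ring
    have hL : 0 ≤ Real.log Γ := Real.log_nonneg hΓ
    have hd1 : u j - u j' ≤ 1 := by
      have := (hu j).2; have := (hu j').1; linarith
    have hd2 : -1 ≤ u j - u j' := by
      have := (hu j).1; have := (hu j').2; linarith
    constructor
    · rw [hratio]
      calc 1 / Γ = Real.exp (-(Real.log Γ)) := by
            rw [Real.exp_neg, Real.exp_log hΓpos, one_div]
        _ ≤ _ := by rw [Real.exp_le_exp]; nlinarith
    · rw [hratio]
      calc Real.exp (Real.log Γ * (u j - u j')) ≤ Real.exp (Real.log Γ) := by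
            rw [Real.exp_le_exp]; nlinarith
        _ = Γ := Real.exp_log hΓpos
end

section
/- Chi-squared tail bound: for a chi-squared random variable χ²_d with d degrees of freedom and any a > 0, Pr(χ²_d ≥ d + (2+a)x) ≤ exp(−x) for all x ≥ 4d/a². -/
/-!
Chernoff's method: tilting the Gamma density by `exp (t s)` gives another Gamma density, so
`Pr(χ²_d ≥ u) ≤ exp (-(u - d) / 2) * (u / d) ^ (d / 2)` for `u > d` (the optimal tilt).
With `u = d + (2 + a) x`, the threshold `x ≥ 4d/a²` is exactly what makes the quadratic term of
`exp (a x / d) ≥ 1 + a x / d + (a x / d)² / 2` dominate `2 x / d`, i.e. `u / d ≤ exp (a x / d)`,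
and then the bound collapses to `exp (-x)`.
-/

open MeasureTheory ProbabilityTheory Real Set

namespace ProbabilityTheory

lemma gammaPDFReal_eq_exp_mul_gammaPDFReal_sub {k r t : ℝ} (hr : 0 ≤ r) (htr : t < r) (s : ℝ) :
    gammaPDFReal k r s = exp (-(t * s)) * (r / (r - t)) ^ k * gammaPDFReal k (r - t) s := by
  have hrt : 0 < r - t := sub_pos.mpr htr
  unfold gammaPDFReal
  split_ifs
  · have hexp : exp (-(r * s)) = exp (-(t * s)) * exp (-((r - t) * s)) := by
      rw [← exp_add]; ring_nf
    rw [div_rpow hr hrt.le, hexp]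
    field_simp
  · simp

lemma gammaMeasure_Ici_le_exp_mul_rpow {k r t : ℝ} (hk : 0 < k) (ht : 0 ≤ t) (htr : t < r)
    (u : ℝ) :
    gammaMeasure k r (Ici u) ≤ ENNReal.ofReal (exp (-(t * u)) * (r / (r - t)) ^ k) := by
  have hr : 0 < r := ht.trans_lt htr
  have hrt : 0 < r - t := sub_pos.mpr htr
  set C := ENNReal.ofReal (exp (-(t * u)) * (r / (r - t)) ^ k)
  have hpdf : ∀ s ∈ Ici u, gammaPDF k r s ≤ C * gammaPDF k (r - t) s := by
    intro s hs
    rw [gammaPDF, gammaPDF, gammaPDFReal_eq_exp_mul_gammaPDFReal_sub hr.le htr,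
      ← ENNReal.ofReal_mul (by positivity)]
    gcongr
    · exact gammaPDFReal_nonneg hk hrt s
    · exact hs
  calc gammaMeasure k r (Ici u) = ∫⁻ s in Ici u, gammaPDF k r s :=
        withDensity_apply _ measurableSet_Ici
    _ ≤ ∫⁻ s in Ici u, C * gammaPDF k (r - t) s :=
        setLIntegral_mono' measurableSet_Ici hpdf
    _ ≤ ∫⁻ s, C * gammaPDF k (r - t) s := setLIntegral_le_lintegral _ _
    _ = C := by
        rw [lintegral_const_mul' _ _ ENNReal.ofReal_ne_top, lintegral_gammaPDF_eq_one hk hrt,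
          mul_one]

lemma gammaMeasure_Ici_le_exp_sub_mul_rpow {k r u : ℝ} (hk : 0 < k) (hr : 0 < r)
    (hku : k ≤ r * u) :
    gammaMeasure k r (Ici u) ≤ ENNReal.ofReal (exp (k - r * u) * (r * u / k) ^ k) := by
  have hu : 0 < u := pos_of_mul_pos_right (hk.trans_le hku) hr.le
  -- the tilt `t = r - k / u` minimizes `exp (-(t * u)) * (r / (r - t)) ^ k`
  have hkuk : 0 < k / u := by positivity
  have ht : 0 ≤ r - k / u := by rwa [sub_nonneg, div_le_iff₀ hu]
  convert gammaMeasure_Ici_le_exp_mul_rpow hk ht (sub_lt_self r hkuk) u using 4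
  · field_simp
    ring
  · rw [sub_sub_cancel]
    field_simp

end ProbabilityTheory

lemma one_add_two_add_mul_le_exp_mul {a y : ℝ} (ha : 0 ≤ a) (hy : 0 ≤ y) (h : 4 ≤ a ^ 2 * y) :
    1 + (2 + a) * y ≤ exp (a * y) :=
  calc 1 + (2 + a) * y ≤ 1 + a * y + (a * y) ^ 2 / 2 := by nlinarith
    _ ≤ exp (a * y) := quadratic_le_exp_of_nonneg (by positivity)

/-- Chi-squared tail bound: for the chi-squared distribution with `d ≥ 1` degrees of freedom
(the Gamma distribution with shape `d/2` and rate `1/2`) and any `a > 0`,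
`Pr(χ²_d ≥ d + (2+a)x) ≤ exp(−x)` for all `x ≥ 4d/a²`. -/
theorem chiSq_tail_bound
    (d : ℕ) (hd : 1 ≤ d) (a : ℝ) (ha : 0 < a) (x : ℝ)
    (hx : (4 : ℝ) * d / a ^ 2 ≤ x) :
    gammaMeasure ((d : ℝ) / 2) (1 / 2) (Set.Ici ((d : ℝ) + (2 + a) * x))
      ≤ ENNReal.ofReal (Real.exp (-x)) := by
  have hd0 : (0 : ℝ) < d := by exact_mod_cast hd
  have hx0 : 0 ≤ x := le_trans (by positivity) hx
  set u := (d : ℝ) + (2 + a) * x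
  have h4 : 4 ≤ a ^ 2 * (x / d) := by
    rw [div_le_iff₀ (by positivity)] at hx
    rw [mul_div_assoc', le_div_iff₀ hd0]
    linarith
  have hud : u / d ≤ exp (a * (x / d)) :=
    calc u / d = 1 + (2 + a) * (x / d) := by simp only [u]; field_simp
      _ ≤ exp (a * (x / d)) := one_add_two_add_mul_le_exp_mul ha.le (by positivity) h4
  refine (gammaMeasure_Ici_le_exp_sub_mul_rpow (u := u) (by positivity) one_half_pos
    (by simp only [u]; nlinarith)).trans (ENNReal.ofReal_le_ofReal ?_)
  calc exp (d / 2 - 1 / 2 * u) * (1 / 2 * u / (d / 2)) ^ ((d : ℝ) / 2)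
      = exp (d / 2 - 1 / 2 * u) * (u / d) ^ ((d : ℝ) / 2) := by congr 2; field_simp
    _ ≤ exp (d / 2 - 1 / 2 * u) * exp (a * (x / d)) ^ ((d : ℝ) / 2) := by gcongr
    _ = exp (-x) := by
        rw [← exp_mul, ← exp_add]
        congr 1
        field_simp
        ring
end

section
/- Let J ≥ 2, Γ ≥ 1, and let η_j ∈ [1/(1+(J−1)Γ), Γ/((J−1)+Γ)] with Σ η_j = 1 and 1/Γ ≤ η_j/η_{j'} ≤ Γ. For any reals y_1 ≤ … ≤ y_J, the maximum of Σ_j η_j y_j over all such η is attained at some vector of the form η_(j) = 1/(m+(J−m)Γ) for j ≤ m and η_(j) = Γ/(m+(J−m)Γ) for j > m, for some m ∈ {1,…,J−1}. -/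
open Finset

lemma count_sum (J m : ℕ) (hm : m ≤ J) (A B : ℝ) :
    ∑ j : Fin J, (if (j:ℕ) < m then A else B) = m * A + ((J - m : ℕ) : ℝ) * B := by
  rw [Fin.sum_univ_eq_sum_range (fun j => if j < m then A else B)]
  rw [Finset.range_eq_Ico, ← Finset.sum_Ico_consecutive _ (Nat.zero_le m) hm]
  rw [Finset.sum_congr rfl (fun j hj => if_pos (Finset.mem_Ico.mp hj).2),
      Finset.sum_congr rfl (fun j hj => if_neg (by simpa using Nat.not_lt.mpr (Finset.mem_Ico.mp hj).1)),
      Finset.sum_const, Finset.sum_const, Nat.card_Ico, Nat.card_Ico]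
  rw [Nat.sub_zero, nsmul_eq_mul, nsmul_eq_mul]

noncomputable def rden (J : ℕ) (Γ : ℝ) (m : ℕ) : ℝ := (m:ℝ) + ((J - m : ℕ) : ℝ) * Γ

noncomputable def rnum (J : ℕ) (Γ : ℝ) (y : Fin J → ℝ) (m : ℕ) : ℝ :=
    ∑ j : Fin J, (if (j:ℕ) < m then 1 else Γ) * y j

noncomputable def rtail (J : ℕ) (y : Fin J → ℝ) (m : ℕ) : ℝ :=
    ∑ j ∈ Finset.univ.filter (fun j : Fin J => m ≤ (j:ℕ)), y j

lemma rden_pos (J : ℕ) (Γ : ℝ) (m : ℕ) (hm : 1 ≤ m) (hΓ : 0 ≤ Γ) : 0 < rden J Γ m := by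
  have h1 : (1:ℝ) ≤ (m:ℝ) := by exact_mod_cast hm
  have h2 : (0:ℝ) ≤ ((J - m : ℕ) : ℝ) * Γ := by positivity
  unfold rden; linarith

lemma rden_cast (J : ℕ) (Γ : ℝ) (m : ℕ) (hm : m ≤ J) :
    rden J Γ m = (m:ℝ) + ((J:ℝ) - (m:ℝ)) * Γ := by
  unfold rden; rw [Nat.cast_sub hm]

lemma weight_sum (J m : ℕ) (Γ : ℝ) (hm1 : 1 ≤ m) (hmJ : m ≤ J) (hΓ : 0 ≤ Γ) :
    ∑ j : Fin J, (if (j:ℕ) < m then 1 / ((m:ℝ) + ((J - m : ℕ):ℝ) * Γ)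
      else Γ / ((m:ℝ) + ((J - m : ℕ):ℝ) * Γ)) = 1 := by
  have hd : (0:ℝ) < (m:ℝ) + ((J - m : ℕ):ℝ) * Γ := rden_pos J Γ m hm1 hΓ
  rw [show (∑ j : Fin J, (if (j:ℕ) < m then 1 / ((m:ℝ) + ((J - m : ℕ):ℝ) * Γ)
      else Γ / ((m:ℝ) + ((J - m : ℕ):ℝ) * Γ))) =
      ∑ j : Fin J, (if (j:ℕ) < m then (1:ℝ) else Γ) / ((m:ℝ) + ((J - m : ℕ):ℝ) * Γ) from
    Finset.sum_congr rfl (fun j _ => by split_ifs <;> rfl)]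
  rw [← Finset.sum_div, count_sum J m hmJ, mul_one]
  exact div_self (ne_of_gt hd)

lemma weight_val (J m : ℕ) (Γ : ℝ) (y : Fin J → ℝ) :
    ∑ j : Fin J, (if (j:ℕ) < m then 1 / ((m:ℝ) + ((J - m : ℕ):ℝ) * Γ)
      else Γ / ((m:ℝ) + ((J - m : ℕ):ℝ) * Γ)) * y j = rnum J Γ y m / rden J Γ m := by
  unfold rnum rden
  rw [Finset.sum_div]
  exact Finset.sum_congr rfl (fun j _ => by split_ifs <;> ring)

lemma tail_card (J m : ℕ) (hm : m ≤ J) :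
    ∑ _j ∈ Finset.univ.filter (fun j : Fin J => m ≤ (j:ℕ)), (1:ℝ) = ((J - m : ℕ):ℝ) := by
  have h1 : ∑ j : Fin J, (if (j:ℕ) < m then (0:ℝ) else 1) = ((J-m:ℕ):ℝ) := by
    rw [count_sum J m hm]; ring
  rw [Finset.sum_filter, ← h1]
  exact Finset.sum_congr rfl fun j _ => by split_ifs <;> first | rfl | (exfalso; omega)

lemma rnum_eq (J m : ℕ) (Γ : ℝ) (y : Fin J → ℝ) :
    rnum J Γ y m = (∑ j, y j) + (Γ - 1) * rtail J y m := by
  unfold rnum rtail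
  rw [Finset.sum_filter, Finset.mul_sum, ← Finset.sum_add_distrib]
  refine Finset.sum_congr rfl (fun j _ => ?_)
  split_ifs <;> (try ring) <;> (exfalso; omega)

lemma rtail_succ (J m : ℕ) (y : Fin J → ℝ) (hm : m < J) :
    rtail J y m = y ⟨m, hm⟩ + rtail J y (m+1) := by
  unfold rtail
  have hset : Finset.univ.filter (fun j : Fin J => m ≤ (j:ℕ))
      = insert ⟨m, hm⟩ (Finset.univ.filter (fun j : Fin J => m + 1 ≤ (j:ℕ))) := by
    ext j
    simp only [Finset.mem_filter, Finset.mem_univ, true_and, Finset.mem_insert, Fin.ext_iff]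
    omega
  rw [hset, Finset.sum_insert (by simp)]

lemma rtail_top (J : ℕ) (y : Fin J → ℝ) : rtail J y J = 0 := by
  unfold rtail
  rw [Finset.filter_false_of_mem (fun j _ => by omega), Finset.sum_empty]

lemma last_step (J : ℕ) (hJ : 2 ≤ J) (Γ : ℝ) (hΓ : 1 ≤ Γ) (y : Fin J → ℝ) (hy : Monotone y) :
    rnum J Γ y J / rden J Γ J ≤ rnum J Γ y (J-1) / rden J Γ (J-1) := by
  have hp : J - 1 < J := by omega
  have hL : ∀ j : Fin J, y j ≤ y ⟨J-1, hp⟩ := fun j => hy (by rw [Fin.le_def]; simp; omega)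
  have hsum : (∑ j, y j) ≤ (J:ℝ) * y ⟨J-1, hp⟩ := by
    calc (∑ j, y j) ≤ ∑ _j : Fin J, y ⟨J-1, hp⟩ := Finset.sum_le_sum (fun j _ => hL j)
    _ = (J:ℝ) * y ⟨J-1, hp⟩ := by
        rw [Finset.sum_const, Finset.card_univ, Fintype.card_fin, nsmul_eq_mul]
  have h1 : rnum J Γ y J = ∑ j, y j := by rw [rnum_eq, rtail_top]; ring
  have h2 : rnum J Γ y (J-1) = (∑ j, y j) + (Γ-1) * y ⟨J-1, hp⟩ := by
    rw [rnum_eq, rtail_succ J (J-1) y hp, show J-1+1 = J by omega, rtail_top]; ring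
  have hd1 : rden J Γ J = (J:ℝ) := by rw [rden_cast J Γ J le_rfl]; ring
  have hd2 : rden J Γ (J-1) = ((J:ℝ)-1) + Γ := by
    rw [rden_cast _ _ _ (Nat.sub_le J 1), Nat.cast_sub (by omega : 1 ≤ J)]; push_cast; ring
  have hJR : (2:ℝ) ≤ (J:ℝ) := by exact_mod_cast hJ
  rw [h1, h2, hd1, hd2, div_le_div_iff₀ (by positivity) (by linarith)]
  nlinarith [mul_nonneg (sub_nonneg.mpr hΓ) (sub_nonneg.mpr hsum)]

set_option maxHeartbeats 1000000 in
lemma main_bound (J : ℕ) (hJ : 2 ≤ J) (Γ : ℝ) (hΓ : 1 < Γ) (y : Fin J → ℝ) (hy : Monotone y)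
    (η : Fin J → ℝ) (h1 : ∀ j, 0 < η j) (h2 : ∑ j, η j = 1) (h3 : ∀ j j', η j / η j' ≤ Γ)
    (M : ℝ) (hM : ∀ m, 1 ≤ m → m ≤ J - 1 → rnum J Γ y m / rden J Γ m ≤ M) :
    ∑ j, η j * y j ≤ M := by
  obtain ⟨j₀, -, hj₀⟩ := Finset.exists_min_image Finset.univ η
    ⟨⟨0, by omega⟩, Finset.mem_univ _⟩
  set a := η j₀ with ha_def
  have ha : 0 < a := h1 j₀
  have hub : ∀ j, η j ≤ Γ * a := fun j => by
    have := h3 j j₀; rwa [div_le_iff₀ ha] at this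
  have hca : 0 < (Γ - 1) * a := by nlinarith
  set t : Fin J → ℝ := fun j => (η j - a) / ((Γ-1)*a) with ht_def
  have ht0 : ∀ j, 0 ≤ t j := fun j =>
    div_nonneg (by linarith [hj₀ j (Finset.mem_univ j)]) hca.le
  have ht1 : ∀ j, t j ≤ 1 := fun j => (div_le_one hca).mpr (by linarith [hub j])
  have hηt : ∀ j, η j = a + (Γ-1)*a * t j := fun j => by
    show η j = a + (Γ-1)*a * ((η j - a)/((Γ-1)*a))
    rw [mul_comm ((Γ-1)*a), div_mul_cancel₀ _ (ne_of_gt hca)]; ring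
  set S := ∑ j, t j with hS_def
  have hS0 : 0 ≤ S := Finset.sum_nonneg fun j _ => ht0 j
  have hsum_eta : (1:ℝ) = (J:ℝ)*a + (Γ-1)*a*S := by
    have hc : ∑ j, η j = (J:ℝ)*a + (Γ-1)*a*S := by
      calc ∑ j, η j = ∑ j : Fin J, (a + (Γ-1)*a * t j) :=
            Finset.sum_congr rfl fun j _ => hηt j
      _ = (J:ℝ)*a + (Γ-1)*a*S := by
          rw [Finset.sum_add_distrib, Finset.sum_const, Finset.card_univ, Fintype.card_fin,
            ← Finset.mul_sum, nsmul_eq_mul]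
    rw [← hc, h2]
  have hSa : a * ((J:ℝ) + (Γ-1)*S) = 1 := by linear_combination -hsum_eta
  have htj₀ : t j₀ = 0 := by simp [ht_def, ← ha_def]
  have hSJ : S ≤ (J:ℝ) - 1 := by
    have hcarde : (Finset.univ.erase j₀).card = J - 1 := by
      rw [Finset.card_erase_of_mem (Finset.mem_univ _), Finset.card_univ, Fintype.card_fin]
    have e2 : ∑ j ∈ Finset.univ.erase j₀, t j ≤ ((J-1:ℕ):ℝ) := by
      have := Finset.sum_le_card_nsmul (Finset.univ.erase j₀) t 1 (fun j _ => ht1 j)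
      rwa [hcarde, nsmul_eq_mul, mul_one] at this
    have e1 : ∑ j ∈ Finset.univ.erase j₀, t j + t j₀ = S :=
      Finset.sum_erase_add _ _ (Finset.mem_univ j₀)
    have hc : ((J-1:ℕ):ℝ) = (J:ℝ) - 1 := by
      rw [Nat.cast_sub (by omega : 1 ≤ J), Nat.cast_one]
    linarith [e2, e1, htj₀]
  set k := min (Nat.floor S) (J-2) with hk_def
  have hkJ2 : k ≤ J - 2 := min_le_right _ _
  have hkS : (k:ℝ) ≤ S := by
    refine le_trans ?_ (Nat.floor_le hS0)
    exact_mod_cast min_le_left (Nat.floor S) (J-2)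
  have hSk1 : S ≤ (k:ℝ) + 1 := by
    rcases le_or_gt (Nat.floor S) (J-2) with h | h
    · rw [hk_def, min_eq_left h]
      exact (Nat.lt_floor_add_one S).le
    · have hk2 : k = J-2 := by rw [hk_def, min_eq_right h.le]
      have : ((J-2:ℕ):ℝ) = (J:ℝ) - 2 := by
        rw [Nat.cast_sub hJ]; push_cast; ring
      rw [hk2, this]; linarith
  set θ := S - (k:ℝ) with hθ_def
  have hθ0 : 0 ≤ θ := by rw [hθ_def]; linarith
  have hθ1 : θ ≤ 1 := by rw [hθ_def]; linarith
  set m' := J - 1 - k with hm'_def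
  have hm'1 : 1 ≤ m' := by omega
  have hm'J : m' + 1 ≤ J := by omega
  have hp : m' < J := by omega
  have hm'cast : (m':ℝ) = (J:ℝ) - 1 - (k:ℝ) := by
    have hh : ((m' + 1 + k : ℕ):ℝ) = (J:ℝ) := by
      rw [show m' + 1 + k = J by omega]
    push_cast at hh; linarith
  set c := y (⟨m', hp⟩ : Fin J) with hc_def
  set T := ∑ j, t j * y j with hT_def
  -- knapsack bound
  have hTl : ∑ j, t j * (y j - c) = T - S * c := by
    rw [hT_def, hS_def]
    rw [show (∑ j, t j * (y j - c)) = ∑ j : Fin J, (t j * y j - t j * c) from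
      Finset.sum_congr rfl fun j _ => by ring]
    rw [Finset.sum_sub_distrib, ← Finset.sum_mul]
  have hsplit := Finset.sum_filter_add_sum_filter_not Finset.univ
    (fun j : Fin J => m' + 1 ≤ (j:ℕ)) (fun j => t j * (y j - c))
  have hbA : ∑ j ∈ Finset.univ.filter (fun j : Fin J => m' + 1 ≤ (j:ℕ)), t j * (y j - c)
      ≤ ∑ j ∈ Finset.univ.filter (fun j : Fin J => m' + 1 ≤ (j:ℕ)), (y j - c) := by
    refine Finset.sum_le_sum fun j hj => ?_
    have hj' : m' + 1 ≤ (j:ℕ) := (Finset.mem_filter.mp hj).2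
    have hcy : c ≤ y j := hy (by rw [Fin.le_def]; simp; omega)
    exact mul_le_of_le_one_left (by linarith) (ht1 j)
  have hbB : ∑ j ∈ Finset.univ.filter (fun j : Fin J => ¬(m' + 1 ≤ (j:ℕ))), t j * (y j - c)
      ≤ 0 := by
    refine Finset.sum_nonpos fun j hj => ?_
    have hj' : ¬(m' + 1 ≤ (j:ℕ)) := (Finset.mem_filter.mp hj).2
    have hcy : y j ≤ c := hy (by rw [Fin.le_def]; simp; omega)
    exact mul_nonpos_iff.mpr (Or.inl ⟨ht0 j, by linarith⟩)
  have hcard : ((Finset.univ.filter (fun j : Fin J => m' + 1 ≤ (j:ℕ))).card : ℝ)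
      = ((J - (m'+1) : ℕ):ℝ) := by
    simpa using tail_card J (m'+1) hm'J
  have hRHS : ∑ j ∈ Finset.univ.filter (fun j : Fin J => m' + 1 ≤ (j:ℕ)), (y j - c)
      = rtail J y (m'+1) - (k:ℝ) * c := by
    rw [Finset.sum_sub_distrib, Finset.sum_const, nsmul_eq_mul, hcard,
      show J - (m'+1) = k by omega]
    rfl
  have hkc : (k:ℝ) * c + θ * c = S * c := by rw [hθ_def]; ring
  have hT2 : T ≤ rtail J y (m'+1) + θ * c := by linarith [hsplit, hbA, hbB, hTl, hRHS, hkc]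
  -- value identity
  have hV : ∑ j, η j * y j = a * (∑ j, y j) + (Γ-1)*a*T := by
    calc ∑ j, η j * y j = ∑ j : Fin J, (a * y j + (Γ-1)*a*(t j * y j)) :=
        Finset.sum_congr rfl fun j _ => by rw [hηt j]; ring
    _ = a * (∑ j, y j) + (Γ-1)*a*T := by
        rw [Finset.sum_add_distrib, ← Finset.mul_sum, ← Finset.mul_sum, hT_def]
  -- endpoint bounds
  have hdp2 : 0 < rden J Γ m' := rden_pos _ _ _ hm'1 (by linarith)
  have hnum2 : rnum J Γ y m' ≤ M * rden J Γ m' := by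
    have := hM m' hm'1 (by omega)
    rwa [div_le_iff₀ hdp2] at this
  have hdp1 : 0 < rden J Γ (m'+1) := rden_pos _ _ _ (by omega) (by linarith)
  have hnum1 : rnum J Γ y (m'+1) ≤ M * rden J Γ (m'+1) := by
    have hdiv : rnum J Γ y (m'+1) / rden J Γ (m'+1) ≤ M := by
      rcases le_or_gt (m'+1) (J-1) with h | h
      · exact hM (m'+1) (by omega) h
      · have hmJeq : m' + 1 = J := by omega
        rw [hmJeq]
        exact le_trans (last_step J hJ Γ hΓ.le y hy) (hM (J-1) (by omega) le_rfl)
    rwa [div_le_iff₀ hdp1] at hdiv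
  have hrel : rnum J Γ y m' = rnum J Γ y (m'+1) + (Γ-1)*c := by
    rw [rnum_eq J m' Γ y, rnum_eq J (m'+1) Γ y, rtail_succ J m' y hp, hc_def]; ring
  have hden1 : rden J Γ (m'+1) = ((m':ℝ)+1) + (k:ℝ)*Γ := by
    rw [rden_cast _ _ _ hm'J]; push_cast; rw [hm'cast]; ring
  have hden2 : rden J Γ m' = (m':ℝ) + ((k:ℝ)+1)*Γ := by
    rw [rden_cast _ _ _ (by omega : m' ≤ J), hm'cast]
    rw [show ((J:ℝ) - ((J:ℝ) - 1 - (k:ℝ))) = (k:ℝ)+1 by ring]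
  have hcombo : (1-θ)*rden J Γ (m'+1) + θ*rden J Γ m' = (J:ℝ) + (Γ-1)*S := by
    rw [hden1, hden2, hm'cast, hθ_def]; ring
  -- final chain
  have hid : a * (∑ j, y j) + (Γ-1)*a*(rtail J y (m'+1) + θ*c)
      = a * ((1-θ) * rnum J Γ y (m'+1) + θ * rnum J Γ y m') := by
    rw [hrel, rnum_eq J (m'+1) Γ y]; ring
  have step1 : ∑ j, η j * y j ≤ a * ((1-θ) * rnum J Γ y (m'+1) + θ * rnum J Γ y m') := by
    rw [hV, ← hid]
    have := mul_le_mul_of_nonneg_left hT2 hca.le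
    linarith [this]
  have q1 : (1-θ) * rnum J Γ y (m'+1) + θ * rnum J Γ y m'
      ≤ (1-θ) * (M * rden J Γ (m'+1)) + θ * (M * rden J Γ m') :=
    add_le_add (mul_le_mul_of_nonneg_left hnum1 (by linarith))
      (mul_le_mul_of_nonneg_left hnum2 hθ0)
  have step2 : a * ((1-θ) * rnum J Γ y (m'+1) + θ * rnum J Γ y m')
      ≤ M * (a * ((1-θ)*rden J Γ (m'+1) + θ*rden J Γ m')) := by
    have := mul_le_mul_of_nonneg_left q1 ha.le
    refine this.trans (le_of_eq (by ring))
  have step3 : M * (a * ((1-θ)*rden J Γ (m'+1) + θ*rden J Γ m')) = M := by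
    rw [hcombo, hSa, mul_one]
  linarith [step1, step2, step3.le, step3.ge]

/-- Extreme points of Rosenbaum's sensitivity set: for `y₁ ≤ … ≤ y_J`, the maximum of
`Σ η_j y_j` over probability vectors `η` with positive entries and pairwise ratios bounded by
`Γ` is attained at a two-level vector giving weight `1/(m+(J−m)Γ)` to the `m` smallest
coordinates and `Γ/(m+(J−m)Γ)` to the rest, for some `m ∈ {1,…,J−1}`. -/
theorem rosenbaum_extreme_point
    (J : ℕ) (hJ : 2 ≤ J) (Γ : ℝ) (hΓ : 1 ≤ Γ)
    (y : Fin J → ℝ) (hy : Monotone y) :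
    ∃ m : ℕ, 1 ≤ m ∧ m ≤ J - 1 ∧
      (fun j : Fin J =>
          if (j : ℕ) < m then 1 / (m + (J - m : ℕ) * Γ) else Γ / (m + (J - m : ℕ) * Γ))
        ∈ {η : Fin J → ℝ | (∀ j, 0 < η j) ∧ (∑ j, η j = 1) ∧
            ∀ j j' : Fin J, η j / η j' ≤ Γ} ∧
      ∀ η ∈ {η : Fin J → ℝ | (∀ j, 0 < η j) ∧ (∑ j, η j = 1) ∧
            ∀ j j' : Fin J, η j / η j' ≤ Γ},
        ∑ j, η j * y j ≤
          ∑ j : Fin J, (if (j : ℕ) < m then 1 / (m + (J - m : ℕ) * Γ)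
            else Γ / (m + (J - m : ℕ) * Γ)) * y j := by
  obtain ⟨m, hmmem, hmax⟩ := Finset.exists_max_image (Finset.Icc 1 (J-1))
    (fun m => rnum J Γ y m / rden J Γ m) ⟨1, Finset.mem_Icc.mpr ⟨le_rfl, by omega⟩⟩
  obtain ⟨hm1, hmJ1⟩ := Finset.mem_Icc.mp hmmem
  have hmJ : m ≤ J := by omega
  have hΓ0 : (0:ℝ) ≤ Γ := by linarith
  have hd : (0:ℝ) < (m:ℝ) + ((J - m : ℕ):ℝ) * Γ := rden_pos J Γ m hm1 hΓ0
  refine ⟨m, hm1, hmJ1, ⟨?_, ?_, ?_⟩, ?_⟩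
  · intro j
    dsimp only
    split_ifs
    · exact div_pos one_pos hd
    · exact div_pos (lt_of_lt_of_le one_pos hΓ) hd
  · exact weight_sum J m Γ hm1 hmJ hΓ0
  · intro j j'
    dsimp only
    have hlo : ∀ j'' : Fin J, 1/((m:ℝ) + ((J - m : ℕ):ℝ) * Γ)
        ≤ (if (j'' : ℕ) < m then 1 / ((m:ℝ) + ((J - m : ℕ):ℝ) * Γ)
          else Γ / ((m:ℝ) + ((J - m : ℕ):ℝ) * Γ)) := by
      intro j''
      split_ifs
      · exact le_rfl
      · exact (div_le_div_iff_of_pos_right hd).mpr hΓ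
    have hhi : ∀ j'' : Fin J, (if (j'' : ℕ) < m then 1 / ((m:ℝ) + ((J - m : ℕ):ℝ) * Γ)
          else Γ / ((m:ℝ) + ((J - m : ℕ):ℝ) * Γ))
        ≤ Γ * (1/((m:ℝ) + ((J - m : ℕ):ℝ) * Γ)) := by
      intro j''
      split_ifs
      · rw [mul_one_div]
        exact (div_le_div_iff_of_pos_right hd).mpr hΓ
      · rw [mul_one_div]
    have h1d : 0 < 1/((m:ℝ) + ((J - m : ℕ):ℝ) * Γ) := by positivity
    refine le_trans (div_le_div₀ (by positivity) (hhi j) h1d (hlo j')) ?_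
    rw [mul_div_assoc, div_self (ne_of_gt h1d), mul_one]
  · rintro η ⟨h1, h2, h3⟩
    rw [weight_val J m Γ y]
    rcases eq_or_lt_of_le hΓ with hEq | hLt
    · -- Γ = 1 : η is the uniform vector and the bound is an equality
      have hall : ∀ u v : Fin J, η u ≤ η v := fun u v => by
        have := h3 u v; rw [← hEq] at this
        exact (div_le_one (h1 v)).mp this
      have hJR : (0:ℝ) < (J:ℝ) := by positivity
      have huni : ∀ j : Fin J, η j = 1/(J:ℝ) := by
        intro j
        have hsum : (J:ℝ) * η j = 1 := by
          rw [← h2]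
          calc (J:ℝ) * η j = ∑ _j' : Fin J, η j := by
                  rw [Finset.sum_const, Finset.card_univ, Fintype.card_fin, nsmul_eq_mul]
          _ = ∑ j', η j' := Finset.sum_congr rfl fun j' _ =>
              le_antisymm (hall j j') (hall j' j)
        field_simp at hsum ⊢
        linarith
      have hL : ∑ j, η j * y j = (∑ j, y j) / (J:ℝ) := by
        rw [Finset.sum_div]
        exact Finset.sum_congr rfl fun j _ => by rw [huni j]; ring
      have hR : rnum J Γ y m / rden J Γ m = (∑ j, y j) / (J:ℝ) := by
        rw [rnum_eq, rden_cast J Γ m hmJ, ← hEq]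
        norm_num
      rw [hL, hR]
    · exact main_bound J hJ Γ hLt y hy η h1 h2 h3 _
        (fun m'' hm''1 hm''2 => hmax m'' (Finset.mem_Icc.mpr ⟨hm''1, hm''2⟩))
end
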